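/- arXiv:2503.07488 — 7 statements merged into one kernel-verified Lean document; each statement's English description precedes it below -/
import Mathlib

section
/- Let p and q be coprime integers with 1 ≤ p < q and set ω = 2πp/q. Let b : ℝ → ℝ be a smooth (C^∞) 2π-periodic function. Then there exists a smooth 2π-periodic function a : ℝ → ℝ with a(t+ω) − a(t) = b(t) for all t ∈ ℝ if and only if μ{b}(t) = 0 for all t ∈ ℝ. Moreover, when μ{b} ≡ 0 there is exactly one smooth 2π-periodic solution a that additionally satisfies μ{a}(t) = 0 for all t ∈ ℝ. -/
open Real

/-- The average operator `μ{a}(t) = (1/q)·∑_{j=0}^{q−1} a(t + jω)`. -/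
noncomputable def avgOp (q : ℕ) (ω : ℝ) (a : ℝ → ℝ) : ℝ → ℝ :=
  fun t => (1 / (q : ℝ)) * ∑ j ∈ Finset.range q, a (t + j * ω)

private lemma per_nat (f : ℝ → ℝ) (hf : ∀ t, f (t + 2 * π) = f t) :
    ∀ (n : ℕ) (t : ℝ), f (t + n * (2 * π)) = f t := by
  intro n
  induction n with
  | zero => intro t; simp
  | succ n ih =>
    intro t
    have h : t + ((n : ℝ) + 1) * (2 * π) = (t + n * (2 * π)) + 2 * π := by ring
    push_cast
    rw [h, hf, ih]

theorem stmt_2 (p q : ℕ) (hco : Nat.Coprime p q) (hp : 1 ≤ p) (hpq : p < q)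
    (ω : ℝ) (hω : ω = 2 * π * p / q)
    (b : ℝ → ℝ) (hb : ContDiff ℝ (⊤ : ℕ∞) b) (hbper : ∀ t, b (t + 2 * π) = b t) :
    ((∃ a : ℝ → ℝ, ContDiff ℝ (⊤ : ℕ∞) a ∧ (∀ t, a (t + 2 * π) = a t) ∧
        (∀ t, a (t + ω) - a t = b t))
      ↔ (∀ t, avgOp q ω b t = 0)) ∧
    ((∀ t, avgOp q ω b t = 0) →
      ∃! a : ℝ → ℝ, ContDiff ℝ (⊤ : ℕ∞) a ∧ (∀ t, a (t + 2 * π) = a t) ∧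
        (∀ t, a (t + ω) - a t = b t) ∧ (∀ t, avgOp q ω a t = 0)) := by
  have hq0 : (q : ℝ) ≠ 0 := by
    have : 0 < q := lt_of_le_of_lt (Nat.zero_le p) hpq
    exact_mod_cast this.ne'
  have hqω : (q : ℝ) * ω = (p : ℝ) * (2 * π) := by
    rw [hω]; field_simp
  -- any 2π-periodic function is (q·ω)-periodic
  have perq : ∀ f : ℝ → ℝ, (∀ t, f (t + 2 * π) = f t) → ∀ t, f (t + (q : ℝ) * ω) = f t := by
    intro f hf t
    rw [hqω]
    exact per_nat f hf p t
  have hbq : ∀ t, b (t + (q : ℝ) * ω) = b t := perq b hbper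
  -- forward direction of the iff
  have fwd : (∃ a : ℝ → ℝ, ContDiff ℝ (⊤ : ℕ∞) a ∧ (∀ t, a (t + 2 * π) = a t) ∧
      (∀ t, a (t + ω) - a t = b t)) → (∀ t, avgOp q ω b t = 0) := by
    rintro ⟨a, _, haper, hstep⟩ t
    have key : ∑ j ∈ Finset.range q, b (t + j * ω)
        = a (t + q * ω) - a (t + (0 : ℕ) * ω) := by
      rw [← Finset.sum_range_sub (fun j : ℕ => a (t + j * ω)) q]
      apply Finset.sum_congr rfl
      intro j _
      have h1 : t + ((j : ℝ) + 1) * ω = (t + j * ω) + ω := by ring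
      push_cast
      rw [h1, ← hstep (t + j * ω)]
    unfold avgOp
    rw [key]
    simp only [Nat.cast_zero, zero_mul, add_zero]
    rw [perq a haper t]
    ring
  constructor
  · constructor
    · exact fwd
    · -- construct the solution
      intro hμ
      have hsum0 : ∀ s, ∑ j ∈ Finset.range q, b (s + j * ω) = 0 := by
        intro s
        have h := hμ s
        unfold avgOp at h
        rcases mul_eq_zero.mp h with h | h
        · exact absurd h (one_div_ne_zero hq0)
        · exact h
      refine ⟨fun t => (1 / (q : ℝ)) * ∑ j ∈ Finset.range q, (j : ℝ) * b (t + j * ω),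
        ?_, ?_, ?_⟩
      · exact contDiff_const.mul (ContDiff.sum fun j _ =>
          contDiff_const.mul (hb.comp (contDiff_id.add contDiff_const)))
      · intro t
        simp only
        congr 1
        apply Finset.sum_congr rfl
        intro j _
        have h1 : t + 2 * π + (j : ℝ) * ω = (t + j * ω) + 2 * π := by ring
        rw [h1, hbper]
      · intro t
        simp only
        have key : ∑ j ∈ Finset.range q, (j : ℝ) * b (t + ω + j * ω)
            = (∑ j ∈ Finset.range q, (j : ℝ) * b (t + j * ω)) + q * b t := by
          have e1 : ∀ j : ℕ, (j : ℝ) * b (t + ω + j * ω)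
              = ((j : ℝ) + 1) * b (t + ((j : ℝ) + 1) * ω) - b (t + ω + j * ω) := by
            intro j
            have h1 : t + ((j : ℝ) + 1) * ω = t + ω + j * ω := by ring
            rw [h1]; ring
          rw [Finset.sum_congr rfl (fun j _ => e1 j)]
          rw [Finset.sum_sub_distrib]
          have e2 : ∑ j ∈ Finset.range q, b (t + ω + j * ω) = 0 := by
            have := hsum0 (t + ω)
            simpa using this
          rw [e2, sub_zero]
          have e3 : ∑ j ∈ Finset.range q, ((j : ℝ) + 1) * b (t + ((j : ℝ) + 1) * ω)
              = ∑ j ∈ Finset.range q, (fun k : ℕ => (k : ℝ) * b (t + k * ω)) (j + 1) := by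
            apply Finset.sum_congr rfl
            intro j _
            push_cast
            try ring_nf
          rw [e3]
          have e4 := Finset.sum_range_succ' (fun k : ℕ => (k : ℝ) * b (t + k * ω)) q
          -- e4 : ∑ k ∈ range (q+1), f k = ∑ j ∈ range q, f (j+1) + f 0
          have e5 : ∑ k ∈ Finset.range (q + 1), (k : ℝ) * b (t + k * ω)
              = (∑ k ∈ Finset.range q, (k : ℝ) * b (t + k * ω)) + q * b (t + q * ω) :=
            Finset.sum_range_succ _ q
          simp only [Nat.cast_zero, zero_mul, add_zero] at e4
          rw [← e4, e5, hbq t]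
        rw [key]
        rw [mul_add, add_sub_cancel_left, one_div, inv_mul_cancel_left₀ hq0]
  · -- uniqueness part
    intro hμ
    have hsum0 : ∀ s, ∑ j ∈ Finset.range q, b (s + j * ω) = 0 := by
      intro s
      have h := hμ s
      unfold avgOp at h
      rcases mul_eq_zero.mp h with h | h
      · exact absurd h (one_div_ne_zero hq0)
      · exact h
    -- existence with zero average
    set a : ℝ → ℝ := fun t => (1 / (q : ℝ)) * ∑ j ∈ Finset.range q, (j : ℝ) * b (t + j * ω)
      with ha_def
    have ha_smooth : ContDiff ℝ (⊤ : ℕ∞) a :=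
      contDiff_const.mul (ContDiff.sum fun j _ =>
        contDiff_const.mul (hb.comp (contDiff_id.add contDiff_const)))
    have ha_per : ∀ t, a (t + 2 * π) = a t := by
      intro t
      simp only [ha_def]
      congr 1
      apply Finset.sum_congr rfl
      intro j _
      have h1 : t + 2 * π + (j : ℝ) * ω = (t + j * ω) + 2 * π := by ring
      rw [h1, hbper]
    have ha_step : ∀ t, a (t + ω) - a t = b t := by
      intro t
      simp only [ha_def]
      have key : ∑ j ∈ Finset.range q, (j : ℝ) * b (t + ω + j * ω)
          = (∑ j ∈ Finset.range q, (j : ℝ) * b (t + j * ω)) + q * b t := by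
        have e1 : ∀ j : ℕ, (j : ℝ) * b (t + ω + j * ω)
            = ((j : ℝ) + 1) * b (t + ((j : ℝ) + 1) * ω) - b (t + ω + j * ω) := by
          intro j
          have h1 : t + ((j : ℝ) + 1) * ω = t + ω + j * ω := by ring
          rw [h1]; ring
        rw [Finset.sum_congr rfl (fun j _ => e1 j)]
        rw [Finset.sum_sub_distrib]
        have e2 : ∑ j ∈ Finset.range q, b (t + ω + j * ω) = 0 := by
          have := hsum0 (t + ω)
          simpa using this
        rw [e2, sub_zero]
        have e3 : ∑ j ∈ Finset.range q, ((j : ℝ) + 1) * b (t + ((j : ℝ) + 1) * ω)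
            = ∑ j ∈ Finset.range q, (fun k : ℕ => (k : ℝ) * b (t + k * ω)) (j + 1) := by
          apply Finset.sum_congr rfl
          intro j _
          push_cast
          try ring_nf
        rw [e3]
        have e4 := Finset.sum_range_succ' (fun k : ℕ => (k : ℝ) * b (t + k * ω)) q
        have e5 : ∑ k ∈ Finset.range (q + 1), (k : ℝ) * b (t + k * ω)
            = (∑ k ∈ Finset.range q, (k : ℝ) * b (t + k * ω)) + q * b (t + q * ω) :=
          Finset.sum_range_succ _ q
        simp only [Nat.cast_zero, zero_mul, add_zero] at e4
        rw [← e4, e5, hbq t]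
      rw [key]
      rw [mul_add, add_sub_cancel_left, one_div, inv_mul_cancel_left₀ hq0]
    have ha_avg : ∀ t, avgOp q ω a t = 0 := by
      intro t
      unfold avgOp
      simp only [ha_def]
      rw [← Finset.mul_sum, Finset.sum_comm]
      have inner0 : ∀ j ∈ Finset.range q,
          ∑ i ∈ Finset.range q, (j : ℝ) * b (t + i * ω + j * ω) = 0 := by
        intro j _
        rw [← Finset.mul_sum]
        have : ∑ i ∈ Finset.range q, b (t + i * ω + j * ω)
            = ∑ i ∈ Finset.range q, b ((t + j * ω) + i * ω) := by
          apply Finset.sum_congr rfl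
          intro i _
          ring_nf
        rw [this, hsum0 (t + j * ω), mul_zero]
      rw [Finset.sum_eq_zero inner0]
      simp
    refine ⟨a, ⟨ha_smooth, ha_per, ha_step, ha_avg⟩, ?_⟩
    rintro c ⟨_, _, hc_step, hc_avg⟩
    funext t
    have hshift : ∀ j : ℕ, c (t + j * ω) - a (t + j * ω) = c t - a t := by
      intro j
      induction j with
      | zero => simp
      | succ j ih =>
        have h1 : t + ((j : ℝ) + 1) * ω = (t + j * ω) + ω := by ring
        push_cast
        rw [h1]
        have hc := hc_step (t + j * ω)
        have ha := ha_step (t + j * ω)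
        have : c ((t + j * ω) + ω) - a ((t + j * ω) + ω)
            = c (t + j * ω) - a (t + j * ω) := by
          have := hc.trans ha.symm
          linarith
        rw [this, ih]
    have hc0 := hc_avg t
    have ha0 := ha_avg t
    unfold avgOp at hc0 ha0
    have hc0' : ∑ j ∈ Finset.range q, c (t + j * ω) = 0 := by
      rcases mul_eq_zero.mp hc0 with h | h
      · exact absurd h (one_div_ne_zero hq0)
      · exact h
    have ha0' : ∑ j ∈ Finset.range q, a (t + j * ω) = 0 := by
      rcases mul_eq_zero.mp ha0 with h | h
      · exact absurd h (one_div_ne_zero hq0)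
      · exact h
    have hsum : ∑ j ∈ Finset.range q, (c (t + j * ω) - a (t + j * ω))
        = (q : ℝ) * (c t - a t) := by
      rw [Finset.sum_congr rfl (fun j _ => hshift j)]
      simp [mul_comm]
      ring
    rw [Finset.sum_sub_distrib, hc0', ha0', sub_zero] at hsum
    have h0 : (q : ℝ) * (c t - a t) = 0 := hsum.symm
    rcases mul_eq_zero.mp h0 with h | h
    · exact absurd h hq0
    · linarith
end

section
/- Let h : ℝ → ℝ be a twice differentiable function and define S : ℝ² → ℝ by S(φ, φ₁) = 2·h((φ + φ₁)/2)·sin((φ₁ − φ)/2). Then the mixed second partial derivative satisfies ∂²S/∂φ∂φ₁ (φ, φ₁) = (1/2)·( h″(ψ) + h(ψ) )·sin θ, where ψ = (φ + φ₁)/2 and θ = (φ₁ − φ)/2. In particular, if h″ + h > 0 (the radius of curvature is positive) and 0 < φ₁ − φ < 2π, then ∂²S/∂φ∂φ₁ (φ, φ₁) > 0. -/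
open Real

theorem stmt_7 (h : ℝ → ℝ) (hd : ContDiff ℝ 2 h)
    (S : ℝ → ℝ → ℝ)
    (hS : ∀ φ φ₁ : ℝ, S φ φ₁ = 2 * h ((φ + φ₁) / 2) * Real.sin ((φ₁ - φ) / 2)) :
    (∀ φ φ₁ : ℝ,
      deriv (fun x => deriv (fun y => S x y) φ₁) φ
        = (1 / 2) * (deriv (deriv h) ((φ + φ₁) / 2) + h ((φ + φ₁) / 2))
            * Real.sin ((φ₁ - φ) / 2)) ∧
    ((∀ x, deriv (deriv h) x + h x > 0) →
      ∀ φ φ₁ : ℝ, 0 < φ₁ - φ → φ₁ - φ < 2 * π →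
        0 < deriv (fun x => deriv (fun y => S x y) φ₁) φ) := by
  have hd1 : Differentiable ℝ h := hd.differentiable (by norm_num)
  have hd2 : Differentiable ℝ (deriv h) := by
    have := (contDiff_succ_iff_deriv.mp (by norm_num at hd ⊢; exact hd : ContDiff ℝ (1+1) h)).2.2
    exact this.differentiable (by norm_num)
  -- inner derivative
  have inner : ∀ x y : ℝ, HasDerivAt (fun y => S x y)
      (deriv h ((x + y) / 2) * Real.sin ((y - x) / 2)
        + h ((x + y) / 2) * Real.cos ((y - x) / 2)) y := by
    intro x y
    have e : (fun y => S x y) = fun y => 2 * h ((x + y) / 2) * Real.sin ((y - x) / 2) := by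
      funext y; exact hS x y
    rw [e]
    have l1 : HasDerivAt (fun y : ℝ => (x + y) / 2) (1 / 2) y := by
      simpa using ((hasDerivAt_id y).const_add x).div_const 2
    have l2 : HasDerivAt (fun y : ℝ => (y - x) / 2) (1 / 2) y := by
      simpa using ((hasDerivAt_id y).sub_const x).div_const 2
    have dh : HasDerivAt (fun y : ℝ => h ((x + y) / 2)) (deriv h ((x + y) / 2) * (1 / 2)) y :=
      ((hd1 ((x + y) / 2)).hasDerivAt).comp y l1
    have ds : HasDerivAt (fun y : ℝ => Real.sin ((y - x) / 2))
        (Real.cos ((y - x) / 2) * (1 / 2)) y :=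
      by have := (Real.hasDerivAt_sin ((y - x) / 2)).comp y l2; exact this
    have : HasDerivAt (fun y : ℝ => 2 * h ((x + y) / 2) * Real.sin ((y - x) / 2)) _ y := ((dh.const_mul 2).mul ds)
    convert this using 1
    ring
  have innerD : ∀ x : ℝ, ∀ y : ℝ, deriv (fun y => S x y) y
      = deriv h ((x + y) / 2) * Real.sin ((y - x) / 2)
        + h ((x + y) / 2) * Real.cos ((y - x) / 2) := fun x y => (inner x y).deriv
  have main : ∀ φ φ₁ : ℝ,
      deriv (fun x => deriv (fun y => S x y) φ₁) φ
        = (1 / 2) * (deriv (deriv h) ((φ + φ₁) / 2) + h ((φ + φ₁) / 2))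
            * Real.sin ((φ₁ - φ) / 2) := by
    intro φ φ₁
    have e : (fun x => deriv (fun y => S x y) φ₁)
        = fun x => deriv h ((x + φ₁) / 2) * Real.sin ((φ₁ - x) / 2)
            + h ((x + φ₁) / 2) * Real.cos ((φ₁ - x) / 2) := by
      funext x; exact innerD x φ₁
    rw [e]
    have l1 : HasDerivAt (fun x : ℝ => (x + φ₁) / 2) (1 / 2) φ := by
      simpa using ((hasDerivAt_id φ).add_const φ₁).div_const 2
    have l2 : HasDerivAt (fun x : ℝ => (φ₁ - x) / 2) (-1 / 2) φ := by
      simpa using ((hasDerivAt_id φ).const_sub φ₁).div_const 2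
    set ψ := (φ + φ₁) / 2
    set θ := (φ₁ - φ) / 2
    have dh : HasDerivAt (fun x : ℝ => h ((x + φ₁) / 2)) (deriv h ψ * (1 / 2)) φ :=
      ((hd1 ψ).hasDerivAt).comp φ l1
    have dh' : HasDerivAt (fun x : ℝ => deriv h ((x + φ₁) / 2)) (deriv (deriv h) ψ * (1 / 2)) φ :=
      by have := ((hd2 ψ).hasDerivAt).comp φ l1; exact this
    have ds : HasDerivAt (fun x : ℝ => Real.sin ((φ₁ - x) / 2)) (Real.cos θ * (-1 / 2)) φ :=
      by have := (Real.hasDerivAt_sin θ).comp φ l2; exact this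
    have dc : HasDerivAt (fun x : ℝ => Real.cos ((φ₁ - x) / 2)) (-Real.sin θ * (-1 / 2)) φ :=
      by have := (Real.hasDerivAt_cos θ).comp φ l2; exact this
    have := ((dh'.mul ds).add (dh.mul dc)).deriv
    exact this.trans (by ring)
  refine ⟨main, fun hpos φ φ₁ h1 h2 => ?_⟩
  rw [main φ φ₁]
  have hs : 0 < Real.sin ((φ₁ - φ) / 2) :=
    Real.sin_pos_of_pos_of_lt_pi (by linarith) (by linarith)
  have := hpos ((φ + φ₁) / 2)
  positivity
end

section
/- Let p and q be coprime integers with 1 ≤ p < q, and let h : ℝ → ℝ be smooth and 2π-periodic. Let φ : ℤ → ℝ satisfy φ_{j+q} = φ_j + 2πp for all j, set ψ_j = (φ_{j+1} + φ_j)/2 and θ_j = (φ_{j+1} − φ_j)/2, and assume the p/q-periodic configuration equation holds: h′(ψ_j)·sin θ_j + h′(ψ_{j−1})·sin θ_{j−1} − h(ψ_j)·cos θ_j + h(ψ_{j−1})·cos θ_{j−1} = 0 for all j ∈ ℤ. Then for every j ∈ ℤ, (1/q)·∑_{i=0}^{q−1} h′(ψ_{j+i})·sin θ_{j+i} = 0.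 -/
open Real

theorem stmt_9 (p q : ℕ) (hco : Nat.Coprime p q) (hp : 1 ≤ p) (hpq : p < q)
    (h : ℝ → ℝ) (hsm : ContDiff ℝ (⊤ : ℕ∞) h) (hper : ∀ t, h (t + 2 * π) = h t)
    (φ : ℤ → ℝ) (hφ : ∀ j : ℤ, φ (j + q) = φ j + 2 * π * p)
    (ψ θ : ℤ → ℝ)
    (hψ : ∀ j : ℤ, ψ j = (φ (j + 1) + φ j) / 2)
    (hθ : ∀ j : ℤ, θ j = (φ (j + 1) - φ j) / 2)
    (heq : ∀ j : ℤ,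
      deriv h (ψ j) * Real.sin (θ j) + deriv h (ψ (j - 1)) * Real.sin (θ (j - 1))
        - h (ψ j) * Real.cos (θ j) + h (ψ (j - 1)) * Real.cos (θ (j - 1)) = 0) :
    ∀ j : ℤ, (1 / (q : ℝ)) * ∑ i ∈ Finset.range q,
      deriv h (ψ (j + i)) * Real.sin (θ (j + i)) = 0 := by
  -- periodicity of h with period 2πp
  have hperiod : Function.Periodic h (2 * π) := hper
  have hperp : ∀ t, h (t + 2 * π * p) = h t := by
    intro t
    have := (hperiod.nat_mul p) t
    simpa [mul_comm, mul_assoc, mul_left_comm] using this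
  have hderivp : ∀ t, deriv h (t + 2 * π * p) = deriv h t := by
    intro t
    have h1 : (fun x => h (x + 2 * π * p)) = h := funext hperp
    have h2 := deriv_comp_add_const h (2 * π * p) t
    rw [h1] at h2
    exact h2.symm
  -- periodicity of ψ and θ
  have hψp : ∀ j : ℤ, ψ (j + q) = ψ j + 2 * π * p := by
    intro j
    have h1 : φ (j + q + 1) = φ (j + 1) + 2 * π * p := by
      have := hφ (j + 1); rw [show j + 1 + (q : ℤ) = j + q + 1 by ring] at this
      exact this
    rw [hψ, hψ, h1, hφ j]; ring
  have hθp : ∀ j : ℤ, θ (j + q) = θ j := by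
    intro j
    have h1 : φ (j + q + 1) = φ (j + 1) + 2 * π * p := by
      have := hφ (j + 1); rw [show j + 1 + (q : ℤ) = j + q + 1 by ring] at this
      exact this
    rw [hθ, hθ, h1, hφ j]; ring
  set F : ℤ → ℝ := fun j => deriv h (ψ j) * Real.sin (θ j) with hF
  set G : ℤ → ℝ := fun j => h (ψ j) * Real.cos (θ j) with hG
  have hFp : ∀ j : ℤ, F (j + q) = F j := by
    intro j; simp only [hF, hψp, hθp, hderivp]
  have hGp : ∀ j : ℤ, G (j + q) = G j := by
    intro j; simp only [hG, hψp, hθp, hperp]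
  have key : ∀ j : ℤ, F j + F (j - 1) = G j - G (j - 1) := by
    intro j; have := heq j; simp only [hF, hG]; linarith
  intro j
  -- telescoping sum of G
  have htel : ∑ i ∈ Finset.range q, (G (j + i) - G (j + i - 1)) = 0 := by
    have := Finset.sum_range_sub (fun i : ℕ => G (j + i - 1)) q
    have hcast : ∀ i : ℕ, j + ((i : ℤ) + 1) - 1 = j + i := fun i => by ring
    push_cast at this
    simp only [hcast] at this
    calc ∑ i ∈ Finset.range q, (G (j + i) - G (j + i - 1)) = G (j + q - 1) - G (j + 0 - 1) := this
      _ = 0 := by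
          have := hGp (j - 1)
          rw [show j - 1 + (q : ℤ) = j + q - 1 by ring] at this
          simp [this]
  have hsum : ∑ i ∈ Finset.range q, (F (j + i) + F (j + i - 1)) = 0 := by
    rw [show (fun i : ℕ => F (j + i) + F (j + i - 1)) = fun i : ℕ => G (j + i) - G (j + i - 1)
      from funext fun i => key (j + i)] at *
    exact htel
  -- shifted window sum equal
  obtain ⟨n, rfl⟩ : ∃ n, q = n + 1 := ⟨q - 1, by omega⟩
  have hshift : ∑ i ∈ Finset.range (n + 1), F (j + i - 1) = ∑ i ∈ Finset.range (n + 1), F (j + i) := by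
    rw [Finset.sum_range_succ', Finset.sum_range_succ]
    have h1 : ∀ i : ℕ, j + ((i : ℤ) + 1) - 1 = j + i := fun i => by push_cast; ring
    have h2 : F (j + ((0 : ℕ) : ℤ) - 1) = F (j + n) := by
      have h3 := hFp (j - 1)
      push_cast at h3
      rw [show j - 1 + ((n : ℤ) + 1) = j + n by ring] at h3
      simpa using h3.symm
    simp only [Nat.cast_add, Nat.cast_one, h1]
    rw [h2]
  rw [Finset.sum_add_distrib, hshift] at hsum
  have : ∑ i ∈ Finset.range (n + 1), F (j + i) = 0 := by linarith
  simp only [hF] at this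
  rw [this, mul_zero]
end

section
/- Let p and q be coprime integers with 1 ≤ p and p/q ∈ (0, 1/2), and set ω = 2πp/q. Let h : ℝ → ℂ be a continuously differentiable 2π-periodic function satisfying the Gutkin-type difference equation tan(ω/2)·( h′(t+ω) + h′(t) ) = h(t+ω) − h(t) for all t ∈ ℝ. Then for every integer l such that sin(lω/2)·cos(ω/2) ≠ l·cos(lω/2)·sin(ω/2), the l-th Fourier coefficient of h vanishes: ĥ_l = 0. -/
open Real

/-- The `l`-th Fourier coefficient `ĥ_l = (1/2π)·∫₀^{2π} h(t)·e^{−i l t} dt`. -/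
noncomputable def fourierCoeffC (h : ℝ → ℂ) (l : ℤ) : ℂ :=
  (1 / (2 * (π : ℂ))) * ∫ t in (0:ℝ)..(2 * π), h t * Complex.exp (-Complex.I * l * t)

theorem stmt_10 (p q : ℕ) (hco : Nat.Coprime p q) (hp : 1 ≤ p) (hq : 2 * p < q)
    (ω : ℝ) (hω : ω = 2 * π * p / q)
    (h : ℝ → ℂ) (hd : ContDiff ℝ 1 h) (hper : ∀ t, h (t + 2 * π) = h t)
    (heq : ∀ t : ℝ, (Real.tan (ω / 2) : ℂ) * (deriv h (t + ω) + deriv h t)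
      = h (t + ω) - h t) :
    ∀ l : ℤ,
      Real.sin (l * ω / 2) * Real.cos (ω / 2)
        ≠ (l : ℝ) * Real.cos (l * ω / 2) * Real.sin (ω / 2) →
      fourierCoeffC h l = 0 := by
  intro l hl
  have hπ : (0:ℝ) < π := Real.pi_pos
  have hq0 : (0:ℝ) < q := by
    have : 0 < q := lt_of_le_of_lt (Nat.zero_le _) hq
    exact_mod_cast this
  have hp0 : (1:ℝ) ≤ p := by exact_mod_cast hp
  have h2pq : (2:ℝ) * p < q := by exact_mod_cast hq
  have hω_pos : 0 < ω := by
    rw [hω]; positivity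
  have hω_lt : ω < π := by
    rw [hω, div_lt_iff₀ hq0]; nlinarith
  have hcos : Real.cos (ω / 2) ≠ 0 := by
    have : 0 < Real.cos (ω / 2) :=
      Real.cos_pos_of_mem_Ioo ⟨by linarith, by linarith⟩
    exact ne_of_gt this
  -- abbreviations
  set e : ℝ → ℂ := fun t => Complex.exp (-Complex.I * l * t) with he
  have hce : Continuous e := by
    apply Complex.continuous_exp.comp
    exact continuous_const.mul Complex.continuous_ofReal
  have hexp2π : Complex.exp (-Complex.I * l * (2*π)) = 1 := by
    have := Complex.exp_int_mul_two_pi_mul_I (-l)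
    rw [← this]; congr 1; push_cast; ring
  have hPe : ∀ t, e (t + 2*π) = e t := by
    intro t
    show Complex.exp (-Complex.I * l * (↑(t + 2*π))) = _
    rw [show (-Complex.I * l * (↑(t + 2*π))) = -Complex.I * l * t + -Complex.I * l * (2*π) by
      push_cast; ring]
    rw [Complex.exp_add, hexp2π, mul_one]
  have hcont : Continuous h := hd.continuous
  have hdc : Continuous (deriv h) := hd.continuous_deriv le_rfl
  have hHD : ∀ t, HasDerivAt h (deriv h t) t := fun t =>
    ((hd.differentiable one_ne_zero) t).hasDerivAt
  -- shift lemma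
  have key_shift : ∀ g : ℝ → ℂ, Continuous g → (∀ t, g (t + 2*π) = g t) →
      (∫ t in (0:ℝ)..(2*π), g (t + ω) * e t)
        = Complex.exp (Complex.I * l * ω) * ∫ t in (0:ℝ)..(2*π), g t * e t := by
    intro g hg hgp
    have hF : Function.Periodic (fun t => g t * e t) (2*π) := fun t => by
      simp only [hgp t, hPe t]
    have h1 : ∀ t : ℝ, g (t + ω) * e t
        = Complex.exp (Complex.I * l * ω) * (g (t + ω) * e (t + ω)) := by
      intro t
      have h2 : Complex.exp (Complex.I * l * ω) * e (t + ω) = e t := by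
        rw [he]
        simp only
        rw [← Complex.exp_add]
        congr 1
        push_cast; ring
      rw [← h2]; ring
    calc (∫ t in (0:ℝ)..(2*π), g (t + ω) * e t)
        = ∫ t in (0:ℝ)..(2*π),
            Complex.exp (Complex.I * l * ω) * ((fun u => g u * e u) (t + ω)) := by
          simp only [h1]
      _ = Complex.exp (Complex.I * l * ω) *
            ∫ t in (0:ℝ)..(2*π), (fun u => g u * e u) (t + ω) :=
          intervalIntegral.integral_const_mul _ _
      _ = Complex.exp (Complex.I * l * ω) *
            ∫ u in (0+ω)..(2*π+ω), g u * e u := by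
          congr 1
          exact intervalIntegral.integral_comp_add_right (fun u => g u * e u) ω
      _ = Complex.exp (Complex.I * l * ω) *
            ∫ u in (0:ℝ)..(2*π), g u * e u := by
          rw [show (2*π+ω) = ω + 2*π by ring, zero_add,
            hF.intervalIntegral_add_eq ω 0, zero_add]
  -- integration by parts
  have key_ibp : (∫ t in (0:ℝ)..(2*π), deriv h t * e t)
      = Complex.I * l * ∫ t in (0:ℝ)..(2*π), h t * e t := by
    have hv : ∀ t : ℝ, HasDerivAt e ((-Complex.I * l) * e t) t := by
      intro t
      have h0 : HasDerivAt (fun s : ℝ => (-Complex.I * l) * (s : ℂ)) (-Complex.I * l) t := by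
        simpa using (Complex.ofRealCLM.hasDerivAt (x := t)).const_mul (-Complex.I * l)
      have := h0.cexp
      simpa [he, mul_comm] using this
    have hparts := intervalIntegral.integral_deriv_mul_eq_sub_of_hasDerivAt
      (u := h) (v := e) (u' := deriv h) (v' := fun t => (-Complex.I * l) * e t)
      (a := 0) (b := 2*π)
      hcont.continuousOn hce.continuousOn
      (fun x _ => hHD x) (fun x _ => hv x)
      (hdc.intervalIntegrable _ _)
      ((continuous_const.mul hce).intervalIntegrable _ _)
    have hb : h (2*π) * e (2*π) - h 0 * e 0 = 0 := by
      have h1 : h (2*π) = h 0 := by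
        have := hper 0; rwa [zero_add] at this
      have h2 : e (2*π) = e 0 := by
        have := hPe 0; rwa [zero_add] at this
      rw [h1, h2]; ring
    rw [hb] at hparts
    have hsplit : (∫ t in (0:ℝ)..(2*π), deriv h t * e t)
        + ∫ t in (0:ℝ)..(2*π), h t * ((-Complex.I * l) * e t) = 0 := by
      rw [← intervalIntegral.integral_add (f := fun t => deriv h t * e t)
        (g := fun t => h t * ((-Complex.I * l) * e t))
        ((hdc.mul hce).intervalIntegrable _ _)
        ((hcont.mul (continuous_const.mul hce)).intervalIntegrable _ _)]
      exact hparts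
    have h2 : (∫ t in (0:ℝ)..(2*π), h t * ((-Complex.I * l) * e t))
        = (-Complex.I * l) * ∫ t in (0:ℝ)..(2*π), h t * e t := by
      rw [← intervalIntegral.integral_const_mul]
      congr 1; funext t; ring
    rw [h2] at hsplit
    linear_combination hsplit
  -- periodicity of deriv h
  have hPh' : ∀ t, deriv h (t + 2*π) = deriv h t := by
    intro t
    have h1 : (fun s => h (s + 2*π)) = h := funext hper
    calc deriv h (t + 2*π) = deriv (fun s => h (s + 2*π)) t := (deriv_comp_add_const h (2*π) t).symm
      _ = deriv h t := by rw [h1]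
  set I0 := ∫ t in (0:ℝ)..(2*π), h t * e t with hI0
  set E := Complex.exp (Complex.I * l * ω) with hE
  -- integrate the equation
  have eqInt : (Real.tan (ω/2) : ℂ) * (E * (Complex.I * l * I0) + Complex.I * l * I0)
      = E * I0 - I0 := by
    have h1 := key_shift (deriv h) hdc hPh'
    have h2 := key_shift h hcont hper
    have hc1 : Continuous fun t => h (t + ω) := by fun_prop
    have hc2 : Continuous fun t => deriv h (t + ω) := by fun_prop
    have hA : (∫ t in (0:ℝ)..(2*π), (h (t + ω) - h t) * e t) = E * I0 - I0 := by
      have : (∫ t in (0:ℝ)..(2*π), (h (t + ω) - h t) * e t)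
          = (∫ t in (0:ℝ)..(2*π), h (t + ω) * e t)
            - ∫ t in (0:ℝ)..(2*π), h t * e t := by
        rw [← intervalIntegral.integral_sub (f := fun t => h (t + ω) * e t)
          (g := fun t => h t * e t)
          ((hc1.mul hce).intervalIntegrable _ _)
          ((hcont.mul hce).intervalIntegrable _ _)]
        congr 1; funext t; ring
      rw [this, h2]
    have hB : (∫ t in (0:ℝ)..(2*π),
          ((Real.tan (ω/2) : ℂ) * (deriv h (t + ω) + deriv h t)) * e t)
        = (Real.tan (ω/2) : ℂ) * (E * (Complex.I * l * I0) + Complex.I * l * I0) := by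
      have hstep : (∫ t in (0:ℝ)..(2*π),
            ((Real.tan (ω/2) : ℂ) * (deriv h (t + ω) + deriv h t)) * e t)
          = (Real.tan (ω/2) : ℂ) * ((∫ t in (0:ℝ)..(2*π), deriv h (t + ω) * e t)
              + ∫ t in (0:ℝ)..(2*π), deriv h t * e t) := by
        rw [← intervalIntegral.integral_add (f := fun t => deriv h (t + ω) * e t)
          (g := fun t => deriv h t * e t)
          ((hc2.mul hce).intervalIntegrable _ _)
          ((hdc.mul hce).intervalIntegrable _ _),
          ← intervalIntegral.integral_const_mul]
        congr 1; funext t; ring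
      rw [hstep, h1, key_ibp]
    rw [← hA, ← hB]
    congr 1; funext t; rw [heq t]
  -- the bracket is nonzero
  have hK : E - 1 - (Real.tan (ω/2) : ℂ) * (Complex.I * l) * (E + 1) ≠ 0 := by
    intro hK0
    have hE' : E = (Real.cos (l * ω) : ℂ) + (Real.sin (l * ω) : ℂ) * Complex.I := by
      rw [hE, show Complex.I * l * ω = ((l * ω : ℝ) : ℂ) * Complex.I by push_cast; ring,
        Complex.exp_mul_I, Complex.ofReal_cos, Complex.ofReal_sin]
    have htc : (Real.tan (ω/2) : ℂ) * (Real.cos (ω/2) : ℂ) = (Real.sin (ω/2) : ℂ) := by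
      rw [← Complex.ofReal_mul, Real.tan_mul_cos hcos]
    rw [hE'] at hK0
    -- real and imaginary parts
    have hAB : ((Real.cos (ω/2) * (Real.cos (l*ω) - 1)
          + Real.sin (ω/2) * l * Real.sin (l*ω) : ℝ) : ℂ)
        + ((Real.cos (ω/2) * Real.sin (l*ω)
          - Real.sin (ω/2) * l * (Real.cos (l*ω) + 1) : ℝ) : ℂ) * Complex.I = 0 := by
      push_cast at hK0 htc ⊢
      linear_combination (Complex.cos ((ω:ℂ)/2)) * hK0
        + (Complex.I * (l:ℂ) * (Complex.cos ((l:ℂ)*(ω:ℂ)) + Complex.sin ((l:ℂ)*(ω:ℂ)) * Complex.I + 1)) * htc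
        + (Complex.sin ((ω:ℂ)/2) * (l:ℂ) * Complex.sin ((l:ℂ)*(ω:ℂ))) * Complex.I_sq
    rw [Complex.ext_iff] at hAB
    simp only [Complex.add_re, Complex.add_im, Complex.ofReal_re, Complex.ofReal_im,
      Complex.mul_re, Complex.mul_im, Complex.I_re, Complex.I_im, Complex.zero_re,
      Complex.zero_im, mul_zero, mul_one, zero_mul, add_zero, zero_add, sub_zero] at hAB
    obtain ⟨hA0, hB0⟩ := hAB
    -- trig identities
    have hsin2 : Real.sin (l * ω) = 2 * Real.sin (l * ω / 2) * Real.cos (l * ω / 2) := by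
      rw [← Real.sin_two_mul]; ring_nf
    have hcos2 : Real.cos (l * ω) = 2 * Real.cos (l * ω / 2) ^ 2 - 1 := by
      rw [← Real.cos_two_mul]; ring_nf
    have hpy := Real.sin_sq_add_cos_sq (l * ω / 2)
    rw [hsin2, hcos2] at hA0 hB0
    exact hl (by linear_combination (-(Real.sin (l*ω/2))/2) * hA0
      + (Real.cos (l*ω/2)/2) * hB0
      - (Real.cos (ω/2) * Real.sin (l*ω/2) - Real.sin (ω/2) * l * Real.cos (l*ω/2)) * hpy
      + (Real.sin (l*ω/2) * Real.cos (ω/2)) * hpy)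
  -- conclude
  have hI0zero : I0 = 0 := by
    have hfac : (E - 1 - (Real.tan (ω/2) : ℂ) * (Complex.I * l) * (E + 1)) * I0 = 0 := by
      linear_combination -eqInt
    rcases mul_eq_zero.1 hfac with hc | hc
    · exact absurd hc hK
    · exact hc
  rw [fourierCoeffC]
  have : (∫ t in (0:ℝ)..(2*π), h t * Complex.exp (-Complex.I * l * t)) = I0 := rfl
  rw [this, hI0zero, mul_zero]
end

section
/- Let p and q be coprime integers with p/q ∈ (0, 1/2), set ω = 2πp/q, s = sin(ω/2) and c = cos(ω/2). Let h₁ : ℝ → ℝ be smooth, 2π-periodic with μ{h₁′} ≡ 0, let θ₁ be the unique smooth 2π-periodic solution of s·δ{θ₁} = δ{c·h₁} − σ{s·h₁′} with μ{θ₁} ≡ 0, let φ₁ be the unique smooth 2π-periodic solution of δ{φ₁} = 2·θ₁ with μ{φ₁} ≡ 0, and set ψ₁ = φ₁ + θ₁. Then μ{ s·h₁″·ψ₁ + c·h₁′·θ₁ } = s·μ{ θ₁·θ₁′ } pointwise on ℝ. -/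
open Real

/-- cyclic shift of a sum over `range q` when `f q = f 0`. -/
lemma sum_shift_aux (q : ℕ) (f : ℕ → ℝ) (h : f q = f 0) :
    ∑ j ∈ Finset.range q, f (j + 1) = ∑ j ∈ Finset.range q, f j := by
  have h1 := Finset.sum_range_succ f q
  have h2 := Finset.sum_range_succ' f q
  linarith

/-- the purely combinatorial core of the computation. -/
lemma key_combinatorial (q : ℕ) (s c : ℝ) (f2 f1 g g' w : ℕ → ℝ)
    (hw : ∀ j, w (j + 1) = w j + g j + g (j + 1))
    (hE : ∀ j, s * g' (j + 1) - s * g' j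
      = (c * f1 (j + 1) - c * f1 j) - (s * f2 (j + 1) + s * f2 j))
    (S2 : ∑ j ∈ Finset.range q, f2 (j + 1) * (w (j + 1) - g (j + 1))
      = ∑ j ∈ Finset.range q, f2 j * (w j - g j))
    (S1 : ∑ j ∈ Finset.range q, f1 (j + 1) * (w (j + 1) - g (j + 1))
      = ∑ j ∈ Finset.range q, f1 j * (w j - g j))
    (S0 : ∑ j ∈ Finset.range q, g' (j + 1) * (w (j + 1) - g (j + 1))
      = ∑ j ∈ Finset.range q, g' j * (w j - g j)) :
    ∑ j ∈ Finset.range q, (s * f2 j * w j + c * f1 j * g j)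
      = s * ∑ j ∈ Finset.range q, (g j * g' j) := by
  have T2 : ∑ j ∈ Finset.range q, s * (f2 (j + 1) * (w (j + 1) - g (j + 1)))
      = ∑ j ∈ Finset.range q, s * (f2 j * (w j - g j)) := by
    rw [← Finset.mul_sum, ← Finset.mul_sum, S2]
  have T1 : ∑ j ∈ Finset.range q, c * (f1 (j + 1) * (w (j + 1) - g (j + 1)))
      = ∑ j ∈ Finset.range q, c * (f1 j * (w j - g j)) := by
    rw [← Finset.mul_sum, ← Finset.mul_sum, S1]
  have T0 : ∑ j ∈ Finset.range q, s * (g' (j + 1) * (w (j + 1) - g (j + 1)))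
      = ∑ j ∈ Finset.range q, s * (g' j * (w j - g j)) := by
    rw [← Finset.mul_sum, ← Finset.mul_sum, S0]
  have e1 : ∀ j ∈ Finset.range q, s * (f2 (j + 1) + f2 j) * (w j + g j)
      = s * (f2 (j + 1) * (w (j + 1) - g (j + 1))) + s * (f2 j * (w j + g j)) := by
    intro j _
    have h2 : w (j + 1) - g (j + 1) = w j + g j := by linarith [hw j]
    rw [h2]; ring
  have e2 : ∀ j ∈ Finset.range q, s * (f2 (j + 1) + f2 j) * (w j + g j)
      = (c * (f1 (j + 1) * (w (j + 1) - g (j + 1)))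
          - s * (g' (j + 1) * (w (j + 1) - g (j + 1))))
        + (s * (g' j * (w j + g j)) - c * (f1 j * (w j + g j))) := by
    intro j _
    have h2 : w (j + 1) - g (j + 1) = w j + g j := by linarith [hw j]
    have h3 := hE j
    rw [h2]
    linear_combination (w j + g j) * h3
  have eval1 : ∑ j ∈ Finset.range q, s * (f2 (j + 1) + f2 j) * (w j + g j)
      = (∑ j ∈ Finset.range q, s * (f2 j * (w j - g j)))
        + ∑ j ∈ Finset.range q, s * (f2 j * (w j + g j)) := by
    rw [Finset.sum_congr rfl e1, Finset.sum_add_distrib, T2]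
  have eval2 : ∑ j ∈ Finset.range q, s * (f2 (j + 1) + f2 j) * (w j + g j)
      = ((∑ j ∈ Finset.range q, c * (f1 j * (w j - g j)))
          - ∑ j ∈ Finset.range q, s * (g' j * (w j - g j)))
        + ((∑ j ∈ Finset.range q, s * (g' j * (w j + g j)))
          - ∑ j ∈ Finset.range q, c * (f1 j * (w j + g j))) := by
    rw [Finset.sum_congr rfl e2, Finset.sum_add_distrib, Finset.sum_sub_distrib,
      Finset.sum_sub_distrib, T1, T0]
  have final := eval1.symm.trans eval2
  -- decompose all the sums into elementary pieces
  have d1 : ∑ j ∈ Finset.range q, s * (f2 j * (w j - g j))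
      = (∑ j ∈ Finset.range q, s * (f2 j * w j)) - ∑ j ∈ Finset.range q, s * (f2 j * g j) := by
    rw [← Finset.sum_sub_distrib]; exact Finset.sum_congr rfl fun j _ => by ring
  have d2 : ∑ j ∈ Finset.range q, s * (f2 j * (w j + g j))
      = (∑ j ∈ Finset.range q, s * (f2 j * w j)) + ∑ j ∈ Finset.range q, s * (f2 j * g j) := by
    rw [← Finset.sum_add_distrib]; exact Finset.sum_congr rfl fun j _ => by ring
  have d3 : ∑ j ∈ Finset.range q, c * (f1 j * (w j - g j))
      = (∑ j ∈ Finset.range q, c * (f1 j * w j)) - ∑ j ∈ Finset.range q, c * (f1 j * g j) := by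
    rw [← Finset.sum_sub_distrib]; exact Finset.sum_congr rfl fun j _ => by ring
  have d4 : ∑ j ∈ Finset.range q, c * (f1 j * (w j + g j))
      = (∑ j ∈ Finset.range q, c * (f1 j * w j)) + ∑ j ∈ Finset.range q, c * (f1 j * g j) := by
    rw [← Finset.sum_add_distrib]; exact Finset.sum_congr rfl fun j _ => by ring
  have d5 : ∑ j ∈ Finset.range q, s * (g' j * (w j - g j))
      = (∑ j ∈ Finset.range q, s * (g' j * w j)) - ∑ j ∈ Finset.range q, s * (g' j * g j) := by
    rw [← Finset.sum_sub_distrib]; exact Finset.sum_congr rfl fun j _ => by ring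
  have d6 : ∑ j ∈ Finset.range q, s * (g' j * (w j + g j))
      = (∑ j ∈ Finset.range q, s * (g' j * w j)) + ∑ j ∈ Finset.range q, s * (g' j * g j) := by
    rw [← Finset.sum_add_distrib]; exact Finset.sum_congr rfl fun j _ => by ring
  rw [d1, d2, d3, d4, d5, d6] at final
  have gl : ∑ j ∈ Finset.range q, (s * f2 j * w j + c * f1 j * g j)
      = (∑ j ∈ Finset.range q, s * (f2 j * w j)) + ∑ j ∈ Finset.range q, c * (f1 j * g j) := by
    rw [← Finset.sum_add_distrib]; exact Finset.sum_congr rfl fun j _ => by ring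
  have gr : s * ∑ j ∈ Finset.range q, (g j * g' j)
      = ∑ j ∈ Finset.range q, s * (g' j * g j) := by
    rw [Finset.mul_sum]; exact Finset.sum_congr rfl fun j _ => by ring
  rw [gl, gr]
  linarith

theorem stmt_12 (p q : ℕ) (hco : Nat.Coprime p q) (hp : 1 ≤ p) (hq : 2 * p < q)
    (ω s c : ℝ) (hω : ω = 2 * π * p / q)
    (hs : s = Real.sin (ω / 2)) (hc : c = Real.cos (ω / 2))
    (h₁ : ℝ → ℝ) (h₁sm : ContDiff ℝ (⊤ : ℕ∞) h₁) (h₁per : ∀ t, h₁ (t + 2 * π) = h₁ t)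
    (h₁avg : ∀ t, avgOp q ω (deriv h₁) t = 0)
    (θ₁ : ℝ → ℝ) (θ₁sm : ContDiff ℝ (⊤ : ℕ∞) θ₁) (θ₁per : ∀ t, θ₁ (t + 2 * π) = θ₁ t)
    (θ₁eq : ∀ t, s * (θ₁ (t + ω) - θ₁ t)
      = (c * h₁ (t + ω) - c * h₁ t) - (s * deriv h₁ (t + ω) + s * deriv h₁ t))
    (θ₁avg : ∀ t, avgOp q ω θ₁ t = 0)
    (φ₁ : ℝ → ℝ) (φ₁sm : ContDiff ℝ (⊤ : ℕ∞) φ₁) (φ₁per : ∀ t, φ₁ (t + 2 * π) = φ₁ t)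
    (φ₁eq : ∀ t, φ₁ (t + ω) - φ₁ t = 2 * θ₁ t)
    (φ₁avg : ∀ t, avgOp q ω φ₁ t = 0)
    (ψ₁ : ℝ → ℝ) (hψ₁ : ∀ t, ψ₁ t = φ₁ t + θ₁ t) :
    ∀ t, avgOp q ω
        (fun u => s * deriv (deriv h₁) u * ψ₁ u + c * deriv h₁ u * θ₁ u) t
      = s * avgOp q ω (fun u => θ₁ u * deriv θ₁ u) t := by
  intro t
  -- basic facts
  have hq0 : 0 < q := by omega
  have hqR : (q : ℝ) ≠ 0 := Nat.cast_ne_zero.mpr (by omega)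
  have hqω : (q : ℝ) * ω = (p : ℝ) * (2 * π) := by rw [hω]; field_simp
  -- periodicity of derivatives via `deriv_comp_add_const`
  have deriv_per : ∀ (g : ℝ → ℝ), (∀ u, g (u + 2 * π) = g u) →
      ∀ u, deriv g (u + 2 * π) = deriv g u := by
    intro g hg u
    have hfun : (fun x => g (x + 2 * π)) = g := funext hg
    rw [← deriv_comp_add_const g (2 * π) u, hfun]
  have h₁'per : ∀ u, deriv h₁ (u + 2 * π) = deriv h₁ u := deriv_per h₁ h₁per
  have h₁''per : ∀ u, deriv (deriv h₁) (u + 2 * π) = deriv (deriv h₁) u :=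
    deriv_per (deriv h₁) h₁'per
  have θ₁'per : ∀ u, deriv θ₁ (u + 2 * π) = deriv θ₁ u := deriv_per θ₁ θ₁per
  have ψ₁per : ∀ u, ψ₁ (u + 2 * π) = ψ₁ u := by
    intro u; rw [hψ₁, hψ₁, φ₁per, θ₁per]
  -- full-period invariance (period q·ω = p·2π)
  have perq : ∀ (g : ℝ → ℝ), (∀ u, g (u + 2 * π) = g u) → ∀ u, g (u + q * ω) = g u := by
    intro g hg u
    have hper : Function.Periodic g (2 * π) := hg
    have := (hper.nat_mul p) u
    rw [hqω]
    exact this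
  -- shift of sums
  have shift : ∀ (g : ℝ → ℝ), (∀ u, g (u + 2 * π) = g u) →
      ∑ j ∈ Finset.range q, g (t + ((j + 1 : ℕ) : ℝ) * ω)
        = ∑ j ∈ Finset.range q, g (t + (j : ℝ) * ω) := by
    intro g hg
    exact sum_shift_aux q (fun j => g (t + (j : ℝ) * ω)) (by
      simp only [Nat.cast_zero, zero_mul, add_zero]
      exact perq g hg t)
  -- differentiability facts
  have hθd : Differentiable ℝ θ₁ := θ₁sm.differentiable (by simp)
  have hhd : Differentiable ℝ h₁ := h₁sm.differentiable (by simp)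
  have hh1' : ContDiff ℝ (⊤ : ℕ∞) (deriv h₁) :=
    (contDiff_infty_iff_deriv.mp (h₁sm.of_le (by simp))).2
  have hh1'd : Differentiable ℝ (deriv h₁) := hh1'.differentiable (by simp)
  -- differentiated θ₁-equation
  have E1' : ∀ u, s * deriv θ₁ (u + ω) - s * deriv θ₁ u
      = (c * deriv h₁ (u + ω) - c * deriv h₁ u)
        - (s * deriv (deriv h₁) (u + ω) + s * deriv (deriv h₁) u) := by
    intro u
    have hL : HasDerivAt (fun x => s * (θ₁ (x + ω) - θ₁ x))
        (s * (deriv θ₁ (u + ω) - deriv θ₁ u)) u := by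
      exact (((hθd (u + ω)).hasDerivAt.comp_add_const u ω).sub (hθd u).hasDerivAt).const_mul s
    have hR : HasDerivAt
        (fun x => (c * h₁ (x + ω) - c * h₁ x) - (s * deriv h₁ (x + ω) + s * deriv h₁ x))
        ((c * deriv h₁ (u + ω) - c * deriv h₁ u)
          - (s * deriv (deriv h₁) (u + ω) + s * deriv (deriv h₁) u)) u := by
      exact ((((hhd (u + ω)).hasDerivAt.comp_add_const u ω).const_mul c).sub
          ((hhd u).hasDerivAt.const_mul c)).sub
        ((((hh1'd (u + ω)).hasDerivAt.comp_add_const u ω).const_mul s).add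
          ((hh1'd u).hasDerivAt.const_mul s))
    have hfun : (fun x => (c * h₁ (x + ω) - c * h₁ x) - (s * deriv h₁ (x + ω) + s * deriv h₁ x))
        = fun x => s * (θ₁ (x + ω) - θ₁ x) := funext fun x => (θ₁eq x).symm
    rw [hfun] at hR
    have := hL.unique hR
    linarith [this]
  -- ψ relation
  have Ψrel : ∀ u, ψ₁ (u + ω) = ψ₁ u + θ₁ u + θ₁ (u + ω) := by
    intro u
    have h1 := hψ₁ (u + ω)
    have h2 := hψ₁ u
    have h3 := φ₁eq u
    linarith
  -- indexing step
  have hstep : ∀ j : ℕ, t + ((j + 1 : ℕ) : ℝ) * ω = (t + (j : ℝ) * ω) + ω := by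
    intro j; push_cast; ring
  -- apply the combinatorial lemma
  have key := key_combinatorial q s c
    (fun j => deriv (deriv h₁) (t + (j : ℝ) * ω))
    (fun j => deriv h₁ (t + (j : ℝ) * ω))
    (fun j => θ₁ (t + (j : ℝ) * ω))
    (fun j => deriv θ₁ (t + (j : ℝ) * ω))
    (fun j => ψ₁ (t + (j : ℝ) * ω))
    (by intro j; rw [hstep j]; exact Ψrel _)
    (by intro j; rw [hstep j]; exact E1' _)
    (by
      have := shift (fun u => deriv (deriv h₁) u * (ψ₁ u - θ₁ u)) (fun u => by
        simp only [h₁''per, ψ₁per, θ₁per])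
      simpa using this)
    (by
      have := shift (fun u => deriv h₁ u * (ψ₁ u - θ₁ u)) (fun u => by
        simp only [h₁'per, ψ₁per, θ₁per])
      simpa using this)
    (by
      have := shift (fun u => deriv θ₁ u * (ψ₁ u - θ₁ u)) (fun u => by
        simp only [θ₁'per, ψ₁per, θ₁per])
      simpa using this)
  simp only [avgOp]
  rw [key]
  ring
end

section
/- Let p and q be coprime integers with 1 ≤ p < q and set ω = 2πp/q. Let n ≥ 0 and let b : ℝ → ℝ be a real trigonometric polynomial of degree at most n (i.e. b(t) = ∑_{|l| ≤ n} b̂_l·e^{i l t} with b̂_{−l} = conj(b̂_l)) such that μ{b}(t) = 0 for all t. Then there exists a unique real trigonometric polynomial a of degree at most n with δ{a} = b and μ{a} ≡ 0; moreover a is the unique smooth 2π-periodic function with these two properties. -/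
open Real

/-- A real trigonometric polynomial of degree at most `n`:
`f(t) = ∑_{|l| ≤ n} c_l·e^{i l t}` with `c_{−l} = conj(c_l)`. -/
def IsRealTrigPoly (n : ℕ) (f : ℝ → ℝ) : Prop :=
  ∃ co : ℤ → ℂ, (∀ l : ℤ, co (-l) = (starRingEnd ℂ) (co l)) ∧
    ∀ t : ℝ, (f t : ℂ) = ∑ l ∈ Finset.Icc (-(n : ℤ)) (n : ℤ),
      co l * Complex.exp (Complex.I * l * t)

-- Abel-type lemma
lemma abel18 (f : ℕ → ℝ) (q : ℕ) :
    ∑ k ∈ Finset.range q, (k : ℝ) * (f (k + 1) - f k)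
      = ((q : ℝ) - 1) * f q + f 0 - ∑ k ∈ Finset.range q, f k := by
  induction q with
  | zero => simp
  | succ q ih =>
    rw [Finset.sum_range_succ, ih, Finset.sum_range_succ]
    push_cast
    ring

lemma sumsum18 (c : ℕ → ℝ) (q : ℕ) :
    ∑ j ∈ Finset.range q, ∑ k ∈ Finset.range j, c k
      = ∑ k ∈ Finset.range q, ((q : ℝ) - 1 - k) * c k := by
  induction q with
  | zero => simp
  | succ q ih =>
    rw [Finset.sum_range_succ, ih, Finset.sum_range_succ]
    have : ∑ k ∈ Finset.range q, ((↑(q + 1) : ℝ) - 1 - ↑k) * c k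
        = ∑ k ∈ Finset.range q, (((q : ℝ) - 1 - ↑k) * c k + c k) := by
      refine Finset.sum_congr rfl fun k _ => ?_
      push_cast; ring
    rw [this, Finset.sum_add_distrib]
    push_cast
    ring

theorem stmt_18 (p q n : ℕ) (hco : Nat.Coprime p q) (hp : 1 ≤ p) (hpq : p < q)
    (ω : ℝ) (hω : ω = 2 * π * p / q)
    (b : ℝ → ℝ) (hb : IsRealTrigPoly n b)
    (hμb : ∀ t, avgOp q ω b t = 0) :
    ∃ a : ℝ → ℝ, IsRealTrigPoly n a ∧
      (∀ t, a (t + ω) - a t = b t) ∧ (∀ t, avgOp q ω a t = 0) ∧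
      (∀ a' : ℝ → ℝ, IsRealTrigPoly n a' → (∀ t, a' (t + ω) - a' t = b t) →
        (∀ t, avgOp q ω a' t = 0) → a' = a) ∧
      (∀ g : ℝ → ℝ, ContDiff ℝ (⊤ : ℕ∞) g → (∀ t, g (t + 2 * π) = g t) →
        (∀ t, g (t + ω) - g t = b t) → (∀ t, avgOp q ω g t = 0) → g = a) := by
  have hq0 : 0 < q := by omega
  have hqR : (q : ℝ) ≠ 0 := Nat.cast_ne_zero.mpr hq0.ne'
  set A : ℝ → ℝ := fun t => (1 / (q : ℝ)) * ∑ k ∈ Finset.range q, (k : ℝ) * b (t + k * ω)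
    with hA
  obtain ⟨cb, hcb, hbco⟩ := hb
  -- sums of b over orbit vanish
  have hsum : ∀ t, ∑ j ∈ Finset.range q, b (t + j * ω) = 0 := by
    intro t
    have h := hμb t
    simp only [avgOp] at h
    rcases mul_eq_zero.mp h with h' | h'
    · exact absurd h' (by simp [hqR])
    · exact h'
  -- b is 2π-periodic
  have hper : ∀ t, b (t + 2 * π) = b t := by
    intro t
    have h1 := hbco (t + 2 * π)
    have h2 := hbco t
    rw [← Complex.ofReal_inj, h1, h2]
    refine Finset.sum_congr rfl fun l _ => ?_
    congr 1
    push_cast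
    rw [mul_add, Complex.exp_add]
    have : Complex.exp (Complex.I * l * (2 * π)) = 1 := by
      rw [show Complex.I * (l : ℂ) * (2 * (π : ℂ)) = (l : ℤ) * (2 * π * Complex.I) by push_cast; ring]
      exact Complex.exp_int_mul_two_pi_mul_I l
    rw [this, mul_one]
  -- b has period q*ω
  have hqω : (q : ℝ) * ω = (p : ℝ) * (2 * π) := by
    rw [hω]; field_simp
  have hperq : ∀ t, b (t + q * ω) = b t := by
    intro t
    have hP : Function.Periodic b (2 * π) := fun x => hper x
    have := (hP.nat_mul p) t
    rwa [hqω]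
  -- δA = b
  have hδ : ∀ t, A (t + ω) - A t = b t := by
    intro t
    have e1 : A (t + ω) - A t
        = (1 / (q : ℝ)) * ∑ k ∈ Finset.range q,
            (k : ℝ) * ((fun k : ℕ => b (t + k * ω)) (k + 1) - (fun k : ℕ => b (t + k * ω)) k) := by
      rw [hA]
      simp only
      rw [← mul_sub, ← Finset.sum_sub_distrib]
      congr 1
      refine Finset.sum_congr rfl fun k _ => ?_
      rw [← mul_sub]
      congr 2
      push_cast; ring
    rw [e1, abel18 (fun k : ℕ => b (t + (k : ℝ) * ω)) q]
    simp only [Nat.cast_zero, zero_mul, add_zero]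
    rw [hperq t, hsum t]
    field_simp
    ring
  -- μA = 0
  have hμA : ∀ t, avgOp q ω A t = 0 := by
    intro t
    simp only [avgOp, hA]
    have : ∑ j ∈ Finset.range q, (1 / (q : ℝ)) * ∑ k ∈ Finset.range q, (k : ℝ) * b (t + j * ω + k * ω) = 0 := by
      rw [← Finset.mul_sum, Finset.sum_comm]
      have : ∑ k ∈ Finset.range q, ∑ j ∈ Finset.range q, (k : ℝ) * b (t + j * ω + k * ω) = 0 := by
        refine Finset.sum_eq_zero fun k _ => ?_
        rw [← Finset.mul_sum]
        have : ∑ j ∈ Finset.range q, b (t + j * ω + k * ω)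
            = ∑ j ∈ Finset.range q, b ((t + k * ω) + j * ω) := by
          refine Finset.sum_congr rfl fun j _ => ?_; ring_nf
        rw [this, hsum (t + k * ω), mul_zero]
      rw [this, mul_zero]
    rw [this, mul_zero]
  -- uniqueness
  have huniq : ∀ g : ℝ → ℝ, (∀ t, g (t + ω) - g t = b t) → (∀ t, avgOp q ω g t = 0) → g = A := by
    intro g hδg hμg
    funext t
    have step : ∀ j : ℕ, g (t + j * ω) = g t + ∑ k ∈ Finset.range j, b (t + k * ω) := by
      intro j
      induction j with
      | zero => simp
      | succ j ih =>
        have e : t + (↑(j + 1) : ℝ) * ω = (t + j * ω) + ω := by push_cast; ring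
        rw [e, Finset.sum_range_succ]
        have := hδg (t + j * ω)
        linarith
    have h0 : ∑ j ∈ Finset.range q, g (t + j * ω) = 0 := by
      have h := hμg t
      simp only [avgOp] at h
      rcases mul_eq_zero.mp h with h' | h'
      · exact absurd h' (by simp [hqR])
      · exact h'
    rw [Finset.sum_congr rfl fun j _ => step j, Finset.sum_add_distrib,
      Finset.sum_const, Finset.card_range, sumsum18] at h0
    have expand : ∑ k ∈ Finset.range q, ((q : ℝ) - 1 - k) * b (t + k * ω)
        = ((q : ℝ) - 1) * ∑ k ∈ Finset.range q, b (t + k * ω)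
          - ∑ k ∈ Finset.range q, (k : ℝ) * b (t + k * ω) := by
      rw [Finset.mul_sum, ← Finset.sum_sub_distrib]
      refine Finset.sum_congr rfl fun k _ => ?_
      ring
    rw [expand, hsum t, mul_zero, zero_sub, nsmul_eq_mul] at h0
    have hAt : A t = (1 / (q : ℝ)) * ∑ k ∈ Finset.range q, (k : ℝ) * b (t + k * ω) := rfl
    rw [hAt]
    field_simp
    linarith [h0]
  -- A is a real trig poly
  have hAtrig : IsRealTrigPoly n A := by
    refine ⟨fun l => (1 / (q : ℂ)) * ∑ k ∈ Finset.range q, (k : ℂ) * cb l *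
      Complex.exp (Complex.I * l * (k * ω)), ?_, ?_⟩
    · intro l
      beta_reduce
      rw [hcb]
      rw [map_mul, map_sum]
      congr 1
      · simp
      · refine Finset.sum_congr rfl fun k _ => ?_
        rw [map_mul, map_mul, ← Complex.exp_conj]
        congr 2
        · simp
        · simp only [map_mul, Complex.conj_I, map_intCast, map_natCast, Complex.conj_ofReal]
          push_cast
          ring
    · intro t
      have e0 : (A t : ℂ) = (1 / (q : ℂ)) * ∑ k ∈ Finset.range q, (k : ℂ) * ((b (t + k * ω) : ℝ) : ℂ) := by
        rw [hA]
        push_cast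
        ring_nf
      rw [e0]
      simp_rw [hbco]
      have e1 : ∀ k : ℕ, ∀ l : ℤ, Complex.exp (Complex.I * l * ((t + k * ω : ℝ) : ℂ))
          = Complex.exp (Complex.I * l * ((k : ℝ) * ω : ℝ)) * Complex.exp (Complex.I * l * (t : ℂ)) := by
        intro k l
        rw [← Complex.exp_add]
        congr 1
        push_cast
        ring
      calc (1 / (q : ℂ)) * ∑ k ∈ Finset.range q, (k : ℂ) *
            ∑ l ∈ Finset.Icc (-(n : ℤ)) (n : ℤ), cb l * Complex.exp (Complex.I * l * ((t + k * ω : ℝ) : ℂ))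
          = (1 / (q : ℂ)) * ∑ k ∈ Finset.range q, ∑ l ∈ Finset.Icc (-(n : ℤ)) (n : ℤ),
              (k : ℂ) * cb l * Complex.exp (Complex.I * l * ((k : ℝ) * ω : ℝ)) * Complex.exp (Complex.I * l * (t : ℂ)) := by
            congr 1
            refine Finset.sum_congr rfl fun k _ => ?_
            rw [Finset.mul_sum]
            refine Finset.sum_congr rfl fun l _ => ?_
            rw [e1 k l]
            ring
        _ = ∑ l ∈ Finset.Icc (-(n : ℤ)) (n : ℤ),
              ((1 / (q : ℂ)) * ∑ k ∈ Finset.range q, (k : ℂ) * cb l *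
                Complex.exp (Complex.I * l * ((k : ℝ) * ω : ℝ))) * Complex.exp (Complex.I * l * (t : ℂ)) := by
            rw [Finset.sum_comm, Finset.mul_sum]
            refine Finset.sum_congr rfl fun l _ => ?_
            conv_rhs => rw [mul_assoc, Finset.sum_mul]
        _ = ∑ l ∈ Finset.Icc (-(n : ℤ)) (n : ℤ),
              ((1 / (q : ℂ)) * ∑ k ∈ Finset.range q, (k : ℂ) * cb l *
                Complex.exp (Complex.I * l * ((k : ℝ) * ω))) * Complex.exp (Complex.I * l * t) := by
            push_cast
            rfl
  exact ⟨A, hAtrig, hδ, hμA, fun a' _ h2 h3 => huniq a' h2 h3,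
    fun g _ _ h2 h3 => huniq g h2 h3⟩
end

section
/- Let p and q be coprime integers with p/q ∈ (0, 1/2) and set ω = 2πp/q. Let h : ℝ × ℝ → ℝ be smooth, 2π-periodic in its first variable, and let φ : ℝ × ℝ → ℝ be smooth with φ(t, ε) − t 2π-periodic in t. Define ψ(t, ε) = (φ(t+ω, ε) + φ(t, ε))/2 and θ(t, ε) = (φ(t+ω, ε) − φ(t, ε))/2, and suppose the difference equation holds identically: ∂₁h(ψ(t+ω,ε),ε)·sin θ(t+ω,ε) + ∂₁h(ψ(t,ε),ε)·sin θ(t,ε) − h(ψ(t+ω,ε),ε)·cos θ(t+ω,ε) + h(ψ(t,ε),ε)·cos θ(t,ε) = 0 for all (t, ε). Then for all (t, ε): ∂/∂ε [ μ{ h(ψ(·,ε),ε)·sin θ(·,ε) }(t) ] = μ{ (∂₂h)(ψ(·,ε),ε)·sin θ(·,ε) }(t), where ∂₁h and ∂₂h are the partial derivatives of h with respect to its first and second variables, and μ acts on the variable t. -/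
open Real

private lemma aux_hasDerivAt (F : ℝ → ℝ → ℝ) (hF : ContDiff ℝ (⊤ : ℕ∞) (Function.uncurry F))
    (u : ℝ → ℝ) (u' e : ℝ) (hu : HasDerivAt u u' e) :
    HasDerivAt (fun x => F (u x) x)
      (deriv (fun v => F v e) (u e) * u' + deriv (fun x => F (u e) x) e) e := by
  have hdF : HasFDerivAt (Function.uncurry F)
      (fderiv ℝ (Function.uncurry F) (u e, e)) (u e, e) :=
    (hF.differentiable (by simp) (u e, e)).hasFDerivAt
  set L := fderiv ℝ (Function.uncurry F) (u e, e) with hL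
  have hc : HasDerivAt (fun x => (u x, x)) ((u', 1) : ℝ × ℝ) e :=
    hu.prodMk (hasDerivAt_id e)
  have hcomp' := HasFDerivAt.comp_hasDerivAt (f := fun x => ((u x, x) : ℝ × ℝ)) e hdF hc
  have hcomp : HasDerivAt (fun x => F (u x) x) (L (u', 1)) e := hcomp'
  have hcv1 : HasDerivAt (fun v => ((v, e) : ℝ × ℝ)) (((1 : ℝ), (0 : ℝ)) : ℝ × ℝ) (u e) :=
    (hasDerivAt_id (u e)).prodMk (hasDerivAt_const (u e) e)
  have h1' := hdF.comp_hasDerivAt (u e) hcv1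
  have h1 : HasDerivAt (fun v => F v e) (L (1, 0)) (u e) := h1'
  have hcv2 : HasDerivAt (fun x => (((u e), x) : ℝ × ℝ)) (((0 : ℝ), (1 : ℝ)) : ℝ × ℝ) e :=
    (hasDerivAt_const e (u e)).prodMk (hasDerivAt_id e)
  have h2' := hdF.comp_hasDerivAt e hcv2
  have h2 : HasDerivAt (fun x => F (u e) x) (L (0, 1)) e := h2'
  have hval : L (u', 1) = deriv (fun v => F v e) (u e) * u' + deriv (fun x => F (u e) x) e := by
    rw [h1.deriv, h2.deriv]
    have hsplit : ((u', (1:ℝ)) : ℝ × ℝ) = u' • ((1:ℝ), (0:ℝ)) + ((0:ℝ), (1:ℝ)) := by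
      simp
    rw [hsplit, map_add, map_smul]
    simp [mul_comm, smul_eq_mul]
  rwa [hval] at hcomp

private lemma aux_telescope (q : ℕ) (A B f S d : ℕ → ℝ)
    (hrel : ∀ j : ℕ, A (j+1) + A j - B (j+1) + B j = 0)
    (hA : A q = A 0) (hB : B q = B 0) (hf : f q = f 0)
    (hd : ∀ j : ℕ, d j = S j + (A j * (f (j+1) + f j) + B j * (f (j+1) - f j))) :
    ∑ j ∈ Finset.range q, d j = ∑ j ∈ Finset.range q, S j := by
  have key : ∀ j : ℕ, d j = S j +
      (f j * (A j - B j) - f (j+1) * (A (j+1) - B (j+1))) := by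
    intro j
    have h1 : A (j+1) - B (j+1) = -(A j + B j) := by have := hrel j; linarith
    rw [hd j, h1]; ring
  calc ∑ j ∈ Finset.range q, d j
      = ∑ j ∈ Finset.range q,
          (S j + ((fun j => f j * (A j - B j)) j - (fun j => f j * (A j - B j)) (j+1))) :=
        Finset.sum_congr rfl (fun j _ => key j)
    _ = (∑ j ∈ Finset.range q, S j) +
          ((fun j => f j * (A j - B j)) 0 - (fun j => f j * (A j - B j)) q) := by
        rw [Finset.sum_add_distrib, Finset.sum_range_sub']
    _ = ∑ j ∈ Finset.range q, S j := by simp only; rw [hA, hB, hf]; ring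

theorem stmt_19 (p q : ℕ) (hco : Nat.Coprime p q) (hp : 1 ≤ p) (hq : 2 * p < q)
    (ω : ℝ) (hω : ω = 2 * π * p / q)
    (h : ℝ → ℝ → ℝ) (hsm : ContDiff ℝ (⊤ : ℕ∞) (Function.uncurry h))
    (hper : ∀ u e : ℝ, h (u + 2 * π) e = h u e)
    (φ : ℝ → ℝ → ℝ) (φsm : ContDiff ℝ (⊤ : ℕ∞) (Function.uncurry φ))
    (φper : ∀ t e : ℝ, φ (t + 2 * π) e = φ t e + 2 * π)
    (ψ θ : ℝ → ℝ → ℝ)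
    (hψ : ∀ t e, ψ t e = (φ (t + ω) e + φ t e) / 2)
    (hθ : ∀ t e, θ t e = (φ (t + ω) e - φ t e) / 2)
    (heq : ∀ t e : ℝ,
      deriv (fun u => h u e) (ψ (t + ω) e) * Real.sin (θ (t + ω) e)
        + deriv (fun u => h u e) (ψ t e) * Real.sin (θ t e)
        - h (ψ (t + ω) e) e * Real.cos (θ (t + ω) e)
        + h (ψ t e) e * Real.cos (θ t e) = 0) :
    ∀ t e : ℝ,
      HasDerivAt
        (fun x => (1 / (q : ℝ)) * ∑ j ∈ Finset.range q,
          h (ψ (t + j * ω) x) x * Real.sin (θ (t + j * ω) x))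
        ((1 / (q : ℝ)) * ∑ j ∈ Finset.range q,
          deriv (fun x => h (ψ (t + j * ω) e) x) e * Real.sin (θ (t + j * ω) e))
        e := by
  intro t e
  have hq0 : 0 < q := by omega
  have hqR : (q : ℝ) ≠ 0 := Nat.cast_ne_zero.mpr hq0.ne'
  -- slice differentiability of φ
  have hφs : ∀ s : ℝ, Differentiable ℝ (fun x => φ s x) := by
    intro s
    have : ContDiff ℝ (⊤ : ℕ∞) (fun x : ℝ => Function.uncurry φ (s, x)) :=
      φsm.comp (contDiff_const.prodMk contDiff_id)
    exact this.differentiable (by simp)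
  set g : ℝ → ℝ := fun s => deriv (fun x => φ s x) e with hg_def
  have hg : ∀ s : ℝ, HasDerivAt (fun x => φ s x) (g s) e :=
    fun s => ((hφs s) e).hasDerivAt
  have hψd : ∀ s : ℝ, HasDerivAt (fun x => ψ s x) ((g (s + ω) + g s) / 2) e := by
    intro s
    have hfn : (fun x => ψ s x) = fun x => (φ (s + ω) x + φ s x) / 2 :=
      funext fun x => hψ s x
    rw [hfn]
    exact ((hg (s + ω)).add (hg s)).div_const 2
  have hθd : ∀ s : ℝ, HasDerivAt (fun x => θ s x) ((g (s + ω) - g s) / 2) e := by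
    intro s
    have hfn : (fun x => θ s x) = fun x => (φ (s + ω) x - φ s x) / 2 :=
      funext fun x => hθ s x
    rw [hfn]
    exact ((hg (s + ω)).sub (hg s)).div_const 2
  -- iterated periodicity
  have hperN : ∀ (n : ℕ) (u x : ℝ), h (u + 2 * π * n) x = h u x := by
    intro n
    induction n with
    | zero => simp
    | succ k ih =>
      intro u x
      have e1 : u + 2 * π * ((k : ℝ) + 1) = (u + 2 * π * k) + 2 * π := by ring
      push_cast
      rw [e1, hper, ih]
  have hφpN : ∀ (n : ℕ) (s x : ℝ), φ (s + 2 * π * n) x = φ s x + 2 * π * n := by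
    intro n
    induction n with
    | zero => simp
    | succ k ih =>
      intro s x
      have e1 : s + 2 * π * ((k : ℝ) + 1) = (s + 2 * π * k) + 2 * π := by ring
      push_cast
      rw [e1, φper, ih]; ring
  -- cast helper
  have hcast : ∀ j : ℕ, t + (j : ℝ) * ω + ω = t + ((j : ℕ) + 1 : ℕ) * ω := by
    intro j; push_cast; ring
  -- key endpoint identities
  have haq : t + (q : ℝ) * ω = t + 2 * π * p := by
    rw [hω]; field_simp
  have hψq : ψ (t + (q : ℝ) * ω) e = ψ t e + 2 * π * p := by
    rw [haq, hψ, hψ]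
    have e1 : t + 2 * π * (p : ℝ) + ω = (t + ω) + 2 * π * p := by ring
    rw [e1, hφpN, hφpN]; ring
  have hθq : θ (t + (q : ℝ) * ω) e = θ t e := by
    rw [haq, hθ, hθ]
    have e1 : t + 2 * π * (p : ℝ) + ω = (t + ω) + 2 * π * p := by ring
    rw [e1, hφpN, hφpN]; ring
  have hgq : g (t + (q : ℝ) * ω) = g t := by
    rw [haq]
    show deriv (fun x => φ (t + 2 * π * p) x) e = deriv (fun x => φ t x) e
    have hfn : (fun x => φ (t + 2 * π * p) x) = fun x => φ t x + 2 * π * p :=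
      funext fun x => hφpN p t x
    rw [hfn, deriv_add_const]
  have hHq : deriv (fun v => h v e) (ψ (t + (q : ℝ) * ω) e)
      = deriv (fun v => h v e) (ψ t e) := by
    rw [hψq]
    have hfn : (fun v => h (v + 2 * π * p) e) = fun v => h v e :=
      funext fun v => hperN p v e
    calc deriv (fun v => h v e) (ψ t e + 2 * π * p)
        = deriv (fun v => h (v + 2 * π * p) e) (ψ t e) := (deriv_comp_add_const _ _ _).symm
      _ = deriv (fun v => h v e) (ψ t e) := by rw [hfn]
  have hhq : h (ψ (t + (q : ℝ) * ω) e) e = h (ψ t e) e := by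
    rw [hψq, hperN]
  -- per-term derivatives
  have hterm : ∀ j : ℕ,
      HasDerivAt (fun x => h (ψ (t + (j : ℝ) * ω) x) x * Real.sin (θ (t + (j : ℝ) * ω) x))
        ((deriv (fun v => h v e) (ψ (t + (j : ℝ) * ω) e)
            * ((g (t + (j : ℝ) * ω + ω) + g (t + (j : ℝ) * ω)) / 2)
          + deriv (fun x => h (ψ (t + (j : ℝ) * ω) e) x) e)
          * Real.sin (θ (t + (j : ℝ) * ω) e)
        + h (ψ (t + (j : ℝ) * ω) e) e
          * (Real.cos (θ (t + (j : ℝ) * ω) e)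
            * ((g (t + (j : ℝ) * ω + ω) - g (t + (j : ℝ) * ω)) / 2))) e := by
    intro j
    have h1 := aux_hasDerivAt h hsm (fun x => ψ (t + (j : ℝ) * ω) x)
      ((g (t + (j : ℝ) * ω + ω) + g (t + (j : ℝ) * ω)) / 2) e (hψd (t + (j : ℝ) * ω))
    have h2 := (hθd (t + (j : ℝ) * ω)).sin
    exact h1.mul h2
  -- sum of derivatives
  have hsum0 : HasDerivAt
      (fun x => ∑ j ∈ Finset.range q,
        h (ψ (t + (j : ℝ) * ω) x) x * Real.sin (θ (t + (j : ℝ) * ω) x))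
      (∑ j ∈ Finset.range q,
        ((deriv (fun v => h v e) (ψ (t + (j : ℝ) * ω) e)
            * ((g (t + (j : ℝ) * ω + ω) + g (t + (j : ℝ) * ω)) / 2)
          + deriv (fun x => h (ψ (t + (j : ℝ) * ω) e) x) e)
          * Real.sin (θ (t + (j : ℝ) * ω) e)
        + h (ψ (t + (j : ℝ) * ω) e) e
          * (Real.cos (θ (t + (j : ℝ) * ω) e)
            * ((g (t + (j : ℝ) * ω + ω) - g (t + (j : ℝ) * ω)) / 2)))) e :=
    HasDerivAt.fun_sum (fun j _ => hterm j)
  -- telescoping identity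
  have hrel : ∀ j : ℕ,
      (fun j : ℕ => deriv (fun v => h v e) (ψ (t + (j : ℝ) * ω) e)
        * Real.sin (θ (t + (j : ℝ) * ω) e)) (j + 1)
      + (fun j : ℕ => deriv (fun v => h v e) (ψ (t + (j : ℝ) * ω) e)
        * Real.sin (θ (t + (j : ℝ) * ω) e)) j
      - (fun j : ℕ => h (ψ (t + (j : ℝ) * ω) e) e * Real.cos (θ (t + (j : ℝ) * ω) e)) (j + 1)
      + (fun j : ℕ => h (ψ (t + (j : ℝ) * ω) e) e * Real.cos (θ (t + (j : ℝ) * ω) e)) j = 0 := by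
    intro j
    have := heq (t + (j : ℝ) * ω) e
    simp only
    rw [← hcast j]
    exact this
  have hTel := aux_telescope q
    (fun j : ℕ => deriv (fun v => h v e) (ψ (t + (j : ℝ) * ω) e)
      * Real.sin (θ (t + (j : ℝ) * ω) e))
    (fun j : ℕ => h (ψ (t + (j : ℝ) * ω) e) e * Real.cos (θ (t + (j : ℝ) * ω) e))
    (fun j : ℕ => g (t + (j : ℝ) * ω) / 2)
    (fun j : ℕ => deriv (fun x => h (ψ (t + (j : ℝ) * ω) e) x) e
      * Real.sin (θ (t + (j : ℝ) * ω) e))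
    (fun j : ℕ =>
      (deriv (fun v => h v e) (ψ (t + (j : ℝ) * ω) e)
          * ((g (t + (j : ℝ) * ω + ω) + g (t + (j : ℝ) * ω)) / 2)
        + deriv (fun x => h (ψ (t + (j : ℝ) * ω) e) x) e)
        * Real.sin (θ (t + (j : ℝ) * ω) e)
      + h (ψ (t + (j : ℝ) * ω) e) e
        * (Real.cos (θ (t + (j : ℝ) * ω) e)
          * ((g (t + (j : ℝ) * ω + ω) - g (t + (j : ℝ) * ω)) / 2)))
    hrel
    (by rw [hHq, hθq]; norm_num)
    (by rw [hhq, hθq]; norm_num)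
    (by rw [hgq]; norm_num)
    (by intro j; rw [hcast j]; push_cast; ring)
  rw [hTel] at hsum0
  exact hsum0.const_mul (1 / (q : ℝ))
end
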